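/- Assume κ is a regular uncountable cardinal with κ^{<κ} = κ. For every function f : κ → κ and every condition p ∈ P(F*_κ), there exists a condition q ∈ P(F*_κ) with q ≥ p (that is, q ⊆ p) such that for every κ-branch g ∈ [q], the set {i < κ : f(i) < g(i)} contains a club of κ. -/

import Mathlib

open Cardinal Set

universe u

/-- A node of the tree `^{<κ}κ`: a function from an ordinal `dom < κ` (identified with
`κ.ord`) to ordinals `< κ.ord`, normalized to take value `0` outside its domain. -/
structure KNode (κ : Cardinal.{u}) : Type (u + 1) where
  dom : Ordinal.{u}
  dom_lt : dom < κ.ord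
  val : Ordinal.{u} → Ordinal.{u}
  val_lt : ∀ i, i < dom → val i < κ.ord
  val_zero : ∀ i, ¬ i < dom → val i = 0

namespace KNode

variable {κ : Cardinal.{u}}

/-- The restriction `s↾β` of a node `s` to a domain `β ≤ dom s`. -/
noncomputable def restrict (s : KNode κ) (β : Ordinal.{u}) (h : β ≤ s.dom) : KNode κ where
  dom := β
  dom_lt := lt_of_le_of_lt h s.dom_lt
  val := fun i => if i < β then s.val i else 0
  val_lt := fun i hi => by
    simp only [if_pos hi]; exact s.val_lt i (lt_of_lt_of_le hi h)
  val_zero := fun i hi => if_neg hi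

end KNode

/-- `p` is a subtree of `^{<κ}κ`: a nonempty set of nodes closed under restriction. -/
def IsSubtree {κ : Cardinal.{u}} (p : Set (KNode κ)) : Prop :=
  p.Nonempty ∧ ∀ s ∈ p, ∀ (β : Ordinal.{u}) (h : β ≤ s.dom), s.restrict β h ∈ p

/-- The set `{α < κ : s⌢⟨α⟩ ∈ p}` of immediate successor values of `s` in `p`. -/
def succSet {κ : Cardinal.{u}} (p : Set (KNode κ)) (s : KNode κ) : Set Ordinal.{u} :=
  {a | ∃ t ∈ p, t.dom = s.dom + 1 ∧ (∀ i, i < s.dom → t.val i = s.val i) ∧ t.val s.dom = a}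

/-- `s` is `F`-splitting in `p` if `{α < κ : s⌢⟨α⟩ ∈ p} ∈ F`. -/
def IsSplitting {κ : Cardinal.{u}} (F : Set (Set Ordinal.{u})) (p : Set (KNode κ))
    (s : KNode κ) : Prop :=
  succSet p s ∈ F

/-- The splitting history `deg_p(s) = {i < dom s : ∃ t ∈ p, t↾i = s↾i ∧ t i ≠ s i}`. -/
def deg {κ : Cardinal.{u}} (p : Set (KNode κ)) (s : KNode κ) : Set Ordinal.{u} :=
  {i | i < s.dom ∧ ∃ t ∈ p, i < t.dom ∧ (∀ j, j < i → t.val j = s.val j) ∧ t.val i ≠ s.val i}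

/-- `A` is a closed subset of the ordinal `δ` (in the order topology): every limit point
below `δ` of elements of `A` belongs to `A`. -/
def OrdClosedBelow (A : Set Ordinal.{u}) (δ : Ordinal.{u}) : Prop :=
  ∀ β, β < δ → Order.IsSuccLimit β → (∀ γ, γ < β → ∃ i ∈ A, γ < i ∧ i < β) → β ∈ A

/-- `p` is an `F`-perfect subtree of `^{<κ}κ`. -/
def IsFPerfect (κ : Cardinal.{u}) (F : Set (Set Ordinal.{u})) (p : Set (KNode κ)) : Prop :=
  IsSubtree p ∧
  (∀ β, β < κ.ord → ∃ s ∈ p, β ≤ s.dom) ∧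
  (∀ s ∈ p, ∃ t ∈ p, s.dom ≤ t.dom ∧ (∀ i, i < s.dom → t.val i = s.val i) ∧
    IsSplitting F p t) ∧
  (∀ s : KNode κ, Order.IsSuccLimit s.dom → (∀ β (h : β < s.dom), s.restrict β h.le ∈ p) → s ∈ p)

/-- The forcing notion `P(F)`: `F`-perfect trees satisfying (o) every successor set is a
singleton or a member of `F`, and (i) every splitting history is closed. A condition `q`
is stronger than `p` (`q ≥ p`) iff `q ⊆ p`. -/
def PF (κ : Cardinal.{u}) (F : Set (Set Ordinal.{u})) : Set (Set (KNode κ)) :=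
  {p | IsFPerfect κ F p ∧
    (∀ s ∈ p, (∃ a, succSet p s = {a}) ∨ succSet p s ∈ F) ∧
    (∀ s ∈ p, OrdClosedBelow (deg p s) s.dom)}

/-- Incompatibility of conditions in `P(F)`: no common extension. -/
def Incompat (κ : Cardinal.{u}) (F : Set (Set Ordinal.{u})) (p q : Set (KNode κ)) : Prop :=
  ¬ ∃ r ∈ PF κ F, r ⊆ p ∧ r ⊆ q

/-- The co-bounded filter `F*_κ` on `κ`: sets `A ⊆ κ` with `|κ \ A| < κ`. -/
def cobounded (κ : Cardinal.{u}) : Set (Set Ordinal.{u}) :=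
  {A | A ⊆ Set.Iio κ.ord ∧ #(↥(Set.Iio κ.ord \ A)) < Cardinal.lift.{u + 1} κ}

/-- `F` is a `(<κ)`-complete filter on `κ`. -/
def IsKappaCompleteFilterOn (κ : Cardinal.{u}) (F : Set (Set Ordinal.{u})) : Prop :=
  (∀ A ∈ F, A ⊆ Set.Iio κ.ord) ∧
  Set.Iio κ.ord ∈ F ∧
  (∀ A ∈ F, ∀ B, A ⊆ B → B ⊆ Set.Iio κ.ord → B ∈ F) ∧
  (∀ (ι : Type u) (f : ι → Set Ordinal.{u}), Nonempty ι → #ι < κ →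
    (∀ i, f i ∈ F) → (⋂ i, f i) ∈ F)

/-- `g : κ → κ` is a κ-branch of `q`: every restriction `g↾α`, `α < κ`, is a node of `q`. -/
def IsBranch {κ : Cardinal.{u}} (q : Set (KNode κ)) (g : Ordinal.{u} → Ordinal.{u}) : Prop :=
  ∀ α, α < κ.ord → ∃ s ∈ q, s.dom = α ∧ ∀ i, i < α → s.val i = g i

/-- `C` is a club (closed unbounded set) in `δ`. -/
def IsClubBelow (C : Set Ordinal.{u}) (δ : Ordinal.{u}) : Prop :=
  C ⊆ Set.Iio δ ∧ (∀ β, β < δ → ∃ i ∈ C, β < i) ∧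
  ∀ β, β < δ → Order.IsSuccLimit β → (∀ γ, γ < β → ∃ i ∈ C, γ < i ∧ i < β) → β ∈ C

/-- The dense set `D_f = {p ∈ P(F*_κ) : ∀ s ∈ p, ∀ i ∈ deg_p(s), s(i) > f(i)}`. -/
def Dset (κ : Cardinal.{u}) (f : Ordinal.{u} → Ordinal.{u}) : Set (Set (KNode κ)) :=
  {p | p ∈ PF κ (cobounded κ) ∧ ∀ s ∈ p, ∀ i ∈ deg p s, f i < s.val i}


/-!
Prune `p` to the nodes `s` with `f i < s i` at every level `i` where `s` passes through a
splitting node. A splitting node has a cobounded set of successors, and removing the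
`< κ` many successors `≤ f i` leaves it cobounded, so the pruned tree `q` has the same splitting
nodes and splitting histories as `p`; limit closure and Zorn's lemma then make it unbounded, and
`q ∈ P(F*_κ)`.

Along a branch `g` of `q` the levels of splitting nodes form a club: they are closed because
splitting histories are closed, and unbounded because the first splitting node above a node of
`g` still lies on `g`, as non-splitting nodes have a unique successor. At these levels
`f i < g i` by the definition of `q`.
-/

open Order

namespace KNode

variable {κ : Cardinal.{u}} {s t : KNode κ} {β i : Ordinal.{u}}

theorem ext_of_dom (hdom : s.dom = t.dom) (hval : ∀ i < s.dom, s.val i = t.val i) : s = t := by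
  obtain ⟨d, hd, v, hv, hz⟩ := s
  obtain ⟨d', hd', v', hv', hz'⟩ := t
  obtain rfl : d = d' := hdom
  obtain rfl : v = v' := funext fun i => by
    by_cases h : i < d
    · exact hval i h
    · rw [hz i h, hz' i h]
  rfl

instance : PartialOrder (KNode κ) where
  le s t := s.dom ≤ t.dom ∧ ∀ i < s.dom, t.val i = s.val i
  le_refl _ := ⟨le_rfl, fun _ _ => rfl⟩
  le_trans _ _ _ hst htr :=
    ⟨hst.1.trans htr.1, fun i hi => (htr.2 i (hi.trans_le hst.1)).trans (hst.2 i hi)⟩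
  le_antisymm _ _ hst hts := ext_of_dom (hst.1.antisymm hts.1) fun i hi => (hst.2 i hi).symm

theorem dom_lt_dom_of_lt (h : s < t) : s.dom < t.dom :=
  h.le.1.lt_of_ne fun he => h.not_ge ⟨he.ge, fun i hi => (h.le.2 i (he ▸ hi)).symm⟩

theorem lt_of_le_of_dom_lt (h : s ≤ t) (hdom : s.dom < t.dom) : s < t :=
  h.lt_of_ne (by rintro rfl; exact hdom.false)

theorem restrict_val_of_lt {h : β ≤ s.dom} (hi : i < (s.restrict β h).dom) :
    (s.restrict β h).val i = s.val i :=
  if_pos hi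

theorem restrict_le (s : KNode κ) (β : Ordinal.{u}) (h : β ≤ s.dom) : s.restrict β h ≤ s :=
  ⟨h, fun _ hi => (restrict_val_of_lt hi).symm⟩

theorem restrict_self (s : KNode κ) : s.restrict s.dom le_rfl = s :=
  ext_of_dom rfl fun _ hi => restrict_val_of_lt hi

theorem restrict_of_le (hst : s ≤ t) (h : β ≤ s.dom) :
    t.restrict β (h.trans hst.1) = s.restrict β h :=
  ext_of_dom rfl fun i (hi : i < β) => by
    rw [restrict_val_of_lt hi, restrict_val_of_lt hi, hst.2 i (hi.trans_le h)]

theorem eq_restrict_of_le (hst : s ≤ t) : s = t.restrict s.dom hst.1 := by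
  rw [restrict_of_le hst le_rfl, restrict_self]

theorem le_restrict (hst : s ≤ t) (h : s.dom ≤ β) (hβ : β ≤ t.dom) : s ≤ t.restrict β hβ :=
  ⟨h, fun i hi => by rw [restrict_val_of_lt (hi.trans_le h), hst.2 i hi]⟩

def IsPrefixOf (s : KNode κ) (g : Ordinal.{u} → Ordinal.{u}) : Prop :=
  ∀ i < s.dom, s.val i = g i

theorem exists_union_of_isChain {c : Set (KNode κ)} (hc : IsChain (· ≤ ·) c)
    (hne : c.Nonempty) (hβ : β < κ.ord) (hcβ : ∀ s ∈ c, s.dom ≤ β) :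
    ∃ u : KNode κ, (∀ s ∈ c, s ≤ u) ∧ ∀ i < u.dom, ∃ s ∈ c, i < s.dom := by
  classical
  have hbdd : BddAbove (dom '' c) := ⟨β, by rintro _ ⟨s, hs, rfl⟩; exact hcβ s hs⟩
  have hcoh : ∀ s ∈ c, ∀ t ∈ c, ∀ i < s.dom, i < t.dom → s.val i = t.val i := by
    intro s hs t ht i his hit
    rcases hc.total hs ht with h | h
    · exact (h.2 i his).symm
    · exact h.2 i hit
  let v : Ordinal.{u} → Ordinal.{u} := fun i =>
    if h : ∃ s ∈ c, i < s.dom then (Classical.choose h).val i else 0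
  have hv : ∀ s ∈ c, ∀ i < s.dom, v i = s.val i := by
    intro s hs i hi
    have h : ∃ s ∈ c, i < s.dom := ⟨s, hs, hi⟩
    simp only [v, dif_pos h]
    exact hcoh _ (Classical.choose_spec h).1 s hs i (Classical.choose_spec h).2 hi
  have hsup : ∀ i < sSup (dom '' c), ∃ s ∈ c, i < s.dom := by
    intro i hi
    obtain ⟨_, ⟨s, hs, rfl⟩, his⟩ := exists_lt_of_lt_csSup (hne.image _) hi
    exact ⟨s, hs, his⟩
  refine ⟨⟨sSup (dom '' c), (csSup_le (hne.image _) ?_).trans_lt hβ, v, fun i hi => ?_,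
    fun i hi => dif_neg ?_⟩, fun s hs => ⟨le_csSup hbdd ⟨s, hs, rfl⟩, hv s hs⟩, hsup⟩
  · rintro _ ⟨s, hs, rfl⟩
    exact hcβ s hs
  · obtain ⟨s, hs, his⟩ := hsup i hi
    rw [hv s hs i his]
    exact s.val_lt i his
  · rintro ⟨s, hs, his⟩
    exact hi (his.trans_le (le_csSup hbdd ⟨s, hs, rfl⟩))

end KNode

open KNode

section Cobounded

variable {κ : Cardinal.{u}} {A B : Set Ordinal.{u}}

theorem ord_add_one_lt (hκ : ℵ₀ ≤ κ) {x : Ordinal.{u}} (hx : x < κ.ord) : x + 1 < κ.ord :=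
  (isSuccLimit_ord hκ).add_one_lt hx

theorem mk_Iic_lt_lift (hκ : ℵ₀ ≤ κ) {x : Ordinal.{u}} (hx : x < κ.ord) :
    #(Iic x) < lift.{u + 1} κ := by
  rw [← Iio_succ, mk_Iio_ordinal, lift_lt, ← lt_ord, Order.succ_eq_add_one]
  exact ord_add_one_lt hκ hx

theorem diff_mem_cobounded (hκ : ℵ₀ ≤ κ) (hA : A ∈ cobounded κ) (hB : #B < lift.{u + 1} κ) :
    A \ B ∈ cobounded κ := by
  refine ⟨sdiff_subset.trans hA.1, ?_⟩
  calc #(↥(Iio κ.ord \ (A \ B))) ≤ #(↥((Iio κ.ord \ A) ∪ B)) :=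
        mk_le_mk_of_subset fun a ⟨ha, hab⟩ => by
          by_cases haA : a ∈ A
          · exact Or.inr (not_not.1 fun haB => hab ⟨haA, haB⟩)
          · exact Or.inl ⟨ha, haA⟩
    _ ≤ #(↥(Iio κ.ord \ A)) + #B := mk_union_le _ _
    _ < lift.{u + 1} κ := add_lt_of_lt (aleph0_le_lift.2 hκ) hA.2 hB

theorem nonempty_of_mem_cobounded (hA : A ∈ cobounded κ) : A.Nonempty := by
  by_contra h
  have hcard := hA.2
  rw [not_nonempty_iff_eq_empty.1 h, sdiff_empty, mk_Iio_ordinal, card_ord] at hcard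
  exact hcard.false

theorem nontrivial_of_mem_cobounded (hκ : ℵ₀ ≤ κ) (hA : A ∈ cobounded κ) : A.Nontrivial := by
  obtain ⟨a, ha⟩ := nonempty_of_mem_cobounded hA
  have hsingle : #({a} : Set Ordinal.{u}) < lift.{u + 1} κ := by
    rw [mk_singleton]
    exact one_lt_aleph0.trans_le (aleph0_le_lift.2 hκ)
  obtain ⟨b, hb, hba⟩ := nonempty_of_mem_cobounded (diff_mem_cobounded hκ hA hsingle)
  exact ⟨b, hb, a, ha, hba⟩

end Cobounded

section Tree

variable {κ : Cardinal.{u}} {F : Set (Set Ordinal.{u})} {T : Set (KNode κ)} {s t : KNode κ}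
  {i : Ordinal.{u}}

/-- The closure condition in the definition of an `F`-perfect tree. -/
def IsLimitClosed (T : Set (KNode κ)) : Prop :=
  ∀ s : KNode κ, IsSuccLimit s.dom → (∀ β (h : β < s.dom), s.restrict β h.le ∈ T) → s ∈ T

theorem mem_succSet_of_lt (hT : IsSubtree T) (ht : t ∈ T) (hst : s ≤ t) (hlt : s.dom < t.dom) :
    t.val s.dom ∈ succSet T s := by
  have hle : s.dom + 1 ≤ t.dom := add_one_le_iff.2 hlt
  refine ⟨t.restrict _ hle, hT.2 t ht _ hle, rfl, fun j hj => ?_,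
    restrict_val_of_lt (lt_add_one _)⟩
  rw [restrict_val_of_lt (hj.trans (lt_add_one _)), hst.2 j hj]

theorem exists_gt_of_isSplitting (hs : IsSplitting (cobounded κ) T s) : ∃ t ∈ T, s < t := by
  obtain ⟨_, t, ht, hdom, hagree, -⟩ := nonempty_of_mem_cobounded hs
  exact ⟨t, ht, lt_of_le_of_dom_lt ⟨hdom ▸ (lt_add_one _).le, hagree⟩ (hdom ▸ lt_add_one _)⟩

theorem deg_mono {T' : Set (KNode κ)} (h : T ⊆ T') : deg T s ⊆ deg T' s :=
  fun _ ⟨hi, u, hu, hiu⟩ => ⟨hi, u, h hu, hiu⟩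

theorem mem_deg_of_agree (hi : i < t.dom) (h : ∀ j ≤ i, t.val j = s.val j) (hs : i ∈ deg T s) :
    i ∈ deg T t := by
  obtain ⟨-, u, hu, hiu, hagree, hne⟩ := hs
  exact ⟨hi, u, hu, hiu, fun j hj => (hagree j hj).trans (h j hj.le).symm,
    fun he => hne (he.trans (h i le_rfl))⟩

theorem mem_deg_iff_of_le (hst : s ≤ t) (hi : i < s.dom) : i ∈ deg T s ↔ i ∈ deg T t :=
  ⟨mem_deg_of_agree (hi.trans_le hst.1) fun j hj => hst.2 j (hj.trans_lt hi),
    mem_deg_of_agree hi fun j hj => (hst.2 j (hj.trans_lt hi)).symm⟩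

theorem mem_deg_iff_nontrivial (hT : IsSubtree T) (ht : t ∈ T) :
    i ∈ deg T t ↔ ∃ h : i < t.dom, (succSet T (t.restrict i h.le)).Nontrivial := by
  constructor
  · rintro ⟨hi, u, hu, hiu, hagree, hne⟩
    refine ⟨hi, t.val i, mem_succSet_of_lt hT ht (restrict_le _ _ _) hi, u.val i,
      mem_succSet_of_lt hT hu ⟨hiu.le, fun j hj => ?_⟩ hiu, hne.symm⟩
    exact (hagree j hj).trans (restrict_val_of_lt hj).symm
  · rintro ⟨hi, hnt⟩
    obtain ⟨_, ⟨u, hu, hdom, hagree, rfl⟩, hne⟩ := hnt.exists_ne (t.val i)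
    exact ⟨hi, u, hu, hdom ▸ lt_add_one _,
      fun j hj => (hagree j hj).trans (restrict_val_of_lt hj), hne⟩

theorem isSplitting_iff_nontrivial (hκ : ℵ₀ ≤ κ) (hT : T ∈ PF κ (cobounded κ)) (hs : s ∈ T) :
    IsSplitting (cobounded κ) T s ↔ (succSet T s).Nontrivial := by
  refine ⟨nontrivial_of_mem_cobounded hκ, fun hnt => (hT.2.1 s hs).resolve_left ?_⟩
  rintro ⟨a, ha⟩
  exact not_nontrivial_singleton (ha ▸ hnt)

theorem IsFPerfect.exists_first_splitting_extension (hT : IsFPerfect κ F T) (hs : s ∈ T) :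
    ∃ t ∈ T, s ≤ t ∧ IsSplitting F T t ∧
      ∀ i (hi : i < t.dom), s.dom ≤ i → ¬ IsSplitting F T (t.restrict i hi.le) := by
  obtain ⟨t₀, ht₀, hdom, hagree, hsplit⟩ := hT.2.2.1 s hs
  obtain ⟨i₀, ⟨hsi₀, hi₀, hsplit₀⟩, hmin⟩ := wellFounded_lt.has_min
    {i | s.dom ≤ i ∧ ∃ h : i ≤ t₀.dom, IsSplitting F T (t₀.restrict i h)}
    ⟨t₀.dom, hdom, le_rfl, by rwa [restrict_self]⟩
  refine ⟨t₀.restrict i₀ hi₀, hT.1.2 _ ht₀ _ _, le_restrict ⟨hdom, hagree⟩ hsi₀ hi₀, hsplit₀,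
    fun i hi hsi hspl => hmin i ⟨hsi, hi.le.trans hi₀, ?_⟩ hi⟩
  rwa [← restrict_of_le (restrict_le t₀ i₀ hi₀) hi.le] at hspl

theorem IsSubtree.mem_of_forall_le_of_forall_lt (hT : IsSubtree T) (hlim : IsLimitClosed T)
    {c : Set (KNode κ)} {u : KNode κ} (hcT : c ⊆ T) (hne : c.Nonempty) (hcu : ∀ s ∈ c, s ≤ u)
    (huc : ∀ i < u.dom, ∃ s ∈ c, i < s.dom) : u ∈ T := by
  by_cases hmax : ∃ s ∈ c, u.dom ≤ s.dom
  · obtain ⟨s, hs, hus⟩ := hmax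
    rw [← le_antisymm (hcu s hs) ⟨hus, fun i hi => ((hcu s hs).2 i (hi.trans_le hus)).symm⟩]
    exact hcT hs
  push Not at hmax
  refine hlim u (Ordinal.isSuccLimit_iff.2 ⟨?_, isSuccPrelimit_iff_succ_lt.2 fun a ha => ?_⟩)
    fun γ hγ => ?_
  · obtain ⟨s, hs⟩ := hne
    exact ((zero_le).trans_lt (hmax s hs)).ne'
  · obtain ⟨s, hs, has⟩ := huc a ha
    exact (succ_le_of_lt has).trans_lt (hmax s hs)
  · obtain ⟨s, hs, hγs⟩ := huc γ hγ
    rw [restrict_of_le (hcu s hs) hγs.le]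
    exact hT.2 s (hcT hs) γ hγs.le

theorem IsSubtree.exists_le_dom (hT : IsSubtree T) (hlim : IsLimitClosed T)
    (hext : ∀ s ∈ T, ∃ t ∈ T, s < t) {β : Ordinal.{u}} (hβ : β < κ.ord) :
    ∃ s ∈ T, β ≤ s.dom := by
  obtain ⟨r, hr⟩ := hT.1
  have hroot : r.restrict 0 zero_le ∈ {s ∈ T | s.dom ≤ β} := ⟨hT.2 r hr _ _, zero_le⟩
  have hchain : ∀ c ⊆ {s ∈ T | s.dom ≤ β}, IsChain (· ≤ ·) c → ∀ y ∈ c,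
      ∃ u ∈ {s ∈ T | s.dom ≤ β}, ∀ s ∈ c, s ≤ u := by
    intro c hcS hc y hy
    obtain ⟨u, hcu, huc⟩ := exists_union_of_isChain hc ⟨y, hy⟩ hβ fun s hs => (hcS hs).2
    refine ⟨u, ⟨hT.mem_of_forall_le_of_forall_lt hlim (fun s hs => (hcS hs).1) ⟨y, hy⟩ hcu huc,
      not_lt.1 fun hβu => ?_⟩, hcu⟩
    obtain ⟨s, hs, hβs⟩ := huc β hβu
    exact (hβs.trans_le (hcS hs).2).false
  obtain ⟨m, -, hm⟩ := zorn_le_nonempty₀ _ hchain _ hroot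
  refine ⟨m, hm.prop.1, not_lt.1 fun hmβ => ?_⟩
  obtain ⟨t, ht, hmt⟩ := hext m hm.prop.1
  have hle : m.dom + 1 ≤ t.dom := add_one_le_iff.2 (dom_lt_dom_of_lt hmt)
  exact hm.not_gt ⟨hT.2 t ht _ hle, add_one_le_iff.2 hmβ⟩
    (lt_of_le_of_dom_lt (le_restrict hmt.le (lt_add_one _).le hle) (lt_add_one _))

end Tree

section Prune

variable {κ : Cardinal.{u}} {p : Set (KNode κ)} {f : Ordinal.{u} → Ordinal.{u}} {s t : KNode κ}

def prune (p : Set (KNode κ)) (f : Ordinal.{u} → Ordinal.{u}) : Set (KNode κ) :=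
  {s ∈ p | ∀ i ∈ deg p s, f i < s.val i}

theorem prune_subset : prune p f ⊆ p := fun _ hs => hs.1

theorem restrict_mem_prune (hp : IsSubtree p) (hs : s ∈ prune p f) (β : Ordinal.{u})
    (h : β ≤ s.dom) : s.restrict β h ∈ prune p f := by
  refine ⟨hp.2 s hs.1 β h, fun i hi => ?_⟩
  rw [restrict_val_of_lt hi.1]
  exact hs.2 i ((mem_deg_iff_of_le (restrict_le s β h) hi.1).1 hi)

theorem prune_isSubtree (hp : IsSubtree p) : IsSubtree (prune p f) := by
  obtain ⟨r, hr⟩ := hp.1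
  exact ⟨⟨r.restrict 0 (zero_le), hp.2 r hr _ _, fun _ hi => (not_lt_zero hi.1).elim⟩,
    fun s hs => restrict_mem_prune hp hs⟩

theorem mem_prune_of_le (hs : s ∈ prune p f) (ht : t ∈ p) (hst : s ≤ t)
    (h : ∀ i ∈ deg p t, s.dom ≤ i → f i < t.val i) : t ∈ prune p f := by
  refine ⟨ht, fun i hi => (lt_or_ge i s.dom).elim (fun his => ?_) (h i hi)⟩
  rw [hst.2 i his]
  exact hs.2 i ((mem_deg_iff_of_le hst his).2 hi)

theorem mem_prune_of_isSuccLimit (hp : IsLimitClosed p) (hlim : IsSuccLimit s.dom)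
    (h : ∀ β (hβ : β < s.dom), s.restrict β hβ.le ∈ prune p f) : s ∈ prune p f := by
  refine ⟨hp s hlim fun β hβ => (h β hβ).1, fun i hi => ?_⟩
  have hi₁ : i + 1 < s.dom := hlim.add_one_lt hi.1
  have hlt := (h _ hi₁).2 i ((mem_deg_iff_of_le (restrict_le _ _ _) (lt_add_one i)).2 hi)
  rwa [restrict_val_of_lt (lt_add_one i)] at hlt

theorem succSet_prune (hp : IsSubtree p) (hs : s ∈ prune p f) :
    succSet (prune p f) s = {a ∈ succSet p s | (succSet p s).Nontrivial → f s.dom < a} := by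
  ext a
  constructor
  · rintro ⟨t, ht, hdom, hagree, rfl⟩
    have hst : s ≤ t := ⟨hdom ▸ (lt_add_one _).le, hagree⟩
    refine ⟨⟨t, ht.1, hdom, hagree, rfl⟩, fun hnt => ht.2 _ ?_⟩
    refine (mem_deg_iff_nontrivial hp ht.1).2 ⟨hdom ▸ lt_add_one _, ?_⟩
    rwa [← eq_restrict_of_le hst]
  · rintro ⟨⟨t, ht, hdom, hagree, rfl⟩, hfa⟩
    have hst : s ≤ t := ⟨hdom ▸ (lt_add_one _).le, hagree⟩
    refine ⟨t, mem_prune_of_le hs ht hst fun i hi hsi => ?_, hdom, hagree, rfl⟩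
    obtain ⟨hit, hnt⟩ := (mem_deg_iff_nontrivial hp ht).1 hi
    obtain rfl : i = s.dom := le_antisymm (lt_add_one_iff.1 (hdom ▸ hit)) hsi
    rw [← eq_restrict_of_le hst] at hnt
    exact hfa hnt

theorem isSplitting_prune (hκ : ℵ₀ ≤ κ) (hf : ∀ i, i < κ.ord → f i < κ.ord) (hp : IsSubtree p)
    (hs : s ∈ prune p f) (hsplit : IsSplitting (cobounded κ) p s) :
    IsSplitting (cobounded κ) (prune p f) s := by
  have hsucc : succSet (prune p f) s = succSet p s \ Iic (f s.dom) := by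
    rw [succSet_prune hp hs]
    ext a
    simp [nontrivial_of_mem_cobounded hκ hsplit]
  rw [IsSplitting, hsucc]
  exact diff_mem_cobounded hκ hsplit (mk_Iic_lt_lift hκ (hf _ s.dom_lt))

section

variable (hκ : ℵ₀ ≤ κ) (hf : ∀ i, i < κ.ord → f i < κ.ord) (hp : p ∈ PF κ (cobounded κ))
include hκ hf hp

theorem deg_prune (hs : s ∈ prune p f) : deg (prune p f) s = deg p s := by
  refine Subset.antisymm (deg_mono prune_subset) fun i hi => ?_
  obtain ⟨hi', hnt⟩ := (mem_deg_iff_nontrivial hp.1.1 hs.1).1 hi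
  have hsplit := (isSplitting_iff_nontrivial hκ hp (hp.1.1.2 _ hs.1 _ _)).2 hnt
  exact (mem_deg_iff_nontrivial (prune_isSubtree hp.1.1) hs).2 ⟨hi', nontrivial_of_mem_cobounded
    hκ (isSplitting_prune hκ hf hp.1.1 (restrict_mem_prune hp.1.1 hs _ _) hsplit)⟩

theorem exists_le_isSplitting_prune (hs : s ∈ prune p f) :
    ∃ t ∈ prune p f, s ≤ t ∧ IsSplitting (cobounded κ) (prune p f) t := by
  obtain ⟨t, ht, hst, hsplit, hfirst⟩ := hp.1.exists_first_splitting_extension hs.1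
  have htq : t ∈ prune p f := mem_prune_of_le hs ht hst fun i hi hsi => by
    obtain ⟨hit, hnt⟩ := (mem_deg_iff_nontrivial hp.1.1 ht).1 hi
    exact absurd ((isSplitting_iff_nontrivial hκ hp (hp.1.1.2 _ ht _ _)).2 hnt) (hfirst i hit hsi)
  exact ⟨t, htq, hst, isSplitting_prune hκ hf hp.1.1 htq hsplit⟩

theorem prune_mem_PF : prune p f ∈ PF κ (cobounded κ) := by
  have hq : IsSubtree (prune p f) := prune_isSubtree hp.1.1
  have hlim : IsLimitClosed (prune p f) := fun _ => mem_prune_of_isSuccLimit hp.1.2.2.2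
  have hext : ∀ s ∈ prune p f, ∃ t ∈ prune p f, s < t := fun s hs => by
    obtain ⟨t, ht, hst, htsplit⟩ := exists_le_isSplitting_prune hκ hf hp hs
    obtain ⟨t', ht', htt'⟩ := exists_gt_of_isSplitting htsplit
    exact ⟨t', ht', hst.trans_lt htt'⟩
  refine ⟨⟨hq, fun β hβ => hq.exists_le_dom hlim hext hβ, fun s hs => ?_, hlim⟩, fun s hs => ?_,
    fun s hs => deg_prune hκ hf hp hs ▸ hp.2.2 s hs.1⟩
  · obtain ⟨t, ht, hst, htsplit⟩ := exists_le_isSplitting_prune hκ hf hp hs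
    exact ⟨t, ht, hst.1, hst.2, htsplit⟩
  · rcases hp.2.1 s hs.1 with ⟨a, ha⟩ | hsplit
    · refine Or.inl ⟨a, ?_⟩
      rw [succSet_prune hp.1.1 hs, ha]
      ext
      simp [not_nontrivial_singleton]
    · exact Or.inr (isSplitting_prune hκ hf hp.1.1 hs hsplit)

theorem prune_mem_Dset : prune p f ∈ Dset κ f :=
  ⟨prune_mem_PF hκ hf hp, fun _ hs i hi => hs.2 i (deg_prune hκ hf hp hs ▸ hi)⟩

end

end Prune

section Branch

variable {κ : Cardinal.{u}} {T : Set (KNode κ)} {g : Ordinal.{u} → Ordinal.{u}} {s t : KNode κ}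

theorem IsBranch.exists_isPrefixOf (hg : IsBranch T g) {α : Ordinal.{u}} (hα : α < κ.ord) :
    ∃ s ∈ T, s.dom = α ∧ s.IsPrefixOf g := by
  obtain ⟨s, hs, hdom, hsg⟩ := hg α hα
  exact ⟨s, hs, hdom, fun i hi => hsg i (hdom ▸ hi)⟩

theorem IsBranch.isPrefixOf_of_not_isSplitting (hκ : ℵ₀ ≤ κ) (hT : T ∈ PF κ (cobounded κ))
    (hg : IsBranch T g) (ht : t ∈ T) (hst : s ≤ t) (hsg : s.IsPrefixOf g)
    (hns : ∀ i (hi : i < t.dom), s.dom ≤ i → ¬ IsSplitting (cobounded κ) T (t.restrict i hi.le)) :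
    t.IsPrefixOf g := by
  intro i
  induction i using WellFoundedLT.induction with | _ i ih => ?_
  intro hi
  rcases lt_or_ge i s.dom with his | hsi
  · rw [hst.2 i his, hsg i his]
  have hsub : (succSet T (t.restrict i hi.le)).Subsingleton := not_nontrivial_iff.1
    ((isSplitting_iff_nontrivial hκ hT (hT.1.1.2 t ht i hi.le)).not.1 (hns i hi hsi))
  obtain ⟨b, hb, hbdom, hbg⟩ := hg (i + 1) (ord_add_one_lt hκ (hi.trans t.dom_lt))
  refine hsub (mem_succSet_of_lt hT.1.1 ht (restrict_le _ _ _) hi)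
    ⟨b, hb, hbdom, fun j hj => ?_, hbg i (lt_add_one i)⟩
  rw [hbg j (hj.trans (lt_add_one i)), restrict_val_of_lt hj, ih j hj (hj.trans hi)]

/-- The levels at which the branch `g` passes through a splitting node of `T`
(see `mem_deg_iff_nontrivial`). -/
def branchSplitLevels (T : Set (KNode κ)) (g : Ordinal.{u} → Ordinal.{u}) : Set Ordinal.{u} :=
  {i | ∃ s ∈ T, s.IsPrefixOf g ∧ i ∈ deg T s}

theorem isClubBelow_branchSplitLevels (hκ : ℵ₀ ≤ κ) (hT : T ∈ PF κ (cobounded κ))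
    (hg : IsBranch T g) : IsClubBelow (branchSplitLevels T g) κ.ord := by
  refine ⟨fun i ⟨s, _, _, hi⟩ => hi.1.trans s.dom_lt, fun β hβ => ?_,
    fun β hβ hlim hacc => ?_⟩
  · obtain ⟨s, hs, hsdom, hsg⟩ := hg.exists_isPrefixOf (ord_add_one_lt hκ hβ)
    obtain ⟨t, ht, hst, hsplit, hfirst⟩ := hT.1.exists_first_splitting_extension hs
    have htg := hg.isPrefixOf_of_not_isSplitting hκ hT ht hst hsg hfirst
    obtain ⟨b, hb, hbdom, hbg⟩ := hg.exists_isPrefixOf (ord_add_one_lt hκ t.dom_lt)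
    have htb : t ≤ b := ⟨hbdom ▸ (lt_add_one _).le,
      fun i hi => (hbg i (hbdom ▸ hi.trans (lt_add_one _))).trans (htg i hi).symm⟩
    refine ⟨t.dom, ⟨b, hb, hbg, (mem_deg_iff_nontrivial hT.1.1 hb).2 ⟨hbdom ▸ lt_add_one _, ?_⟩⟩,
      (lt_add_one β).trans_le (hsdom ▸ hst.1)⟩
    rw [← eq_restrict_of_le htb]
    exact (isSplitting_iff_nontrivial hκ hT ht).1 hsplit
  · obtain ⟨s, hs, hsdom, hsg⟩ := hg.exists_isPrefixOf (ord_add_one_lt hκ hβ)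
    refine ⟨s, hs, hsg, hT.2.2 s hs β (hsdom ▸ lt_add_one β) hlim fun γ hγ => ?_⟩
    obtain ⟨i, ⟨s', _, hs'g, hi⟩, hγi, hiβ⟩ := hacc γ hγ
    refine ⟨i, mem_deg_of_agree (hsdom ▸ hiβ.trans (lt_add_one β)) (fun j hj => ?_) hi, hγi, hiβ⟩
    rw [hsg j (hj.trans_lt (hsdom ▸ hiβ.trans (lt_add_one β))), hs'g j (hj.trans_lt hi.1)]

theorem branchSplitLevels_subset {f : Ordinal.{u} → Ordinal.{u}} (hT : T ∈ Dset κ f) :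
    branchSplitLevels T g ⊆ {i | f i < g i} := by
  rintro i ⟨s, hs, hsg, hi⟩
  show f i < g i
  rw [← hsg i hi.1]
  exact hT.2 s hs i hi

end Branch

theorem stmt_6_general (κ : Cardinal.{u}) (hreg : κ.IsRegular)
    (f : Ordinal.{u} → Ordinal.{u}) (hf : ∀ i, i < κ.ord → f i < κ.ord)
    (p : Set (KNode κ)) (hp : p ∈ PF κ (cobounded κ)) :
    ∃ q ∈ PF κ (cobounded κ), q ⊆ p ∧
      ∀ g : Ordinal.{u} → Ordinal.{u}, IsBranch q g →
        ∃ C : Set Ordinal.{u}, IsClubBelow C κ.ord ∧ C ⊆ {i | f i < g i} := by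
  have hκ : ℵ₀ ≤ κ := hreg.aleph0_le
  have hq := prune_mem_Dset hκ hf hp
  exact ⟨prune p f, hq.1, prune_subset, fun g hg =>
    ⟨branchSplitLevels _ g, isClubBelow_branchSplitLevels hκ hq.1 hg, branchSplitLevels_subset hq⟩⟩

/-- If `κ` is regular uncountable with `κ^{<κ} = κ`, then for every
`f : κ → κ` and every `p ∈ P(F*_κ)` there is `q ∈ P(F*_κ)` with `q ≥ p` such that every
κ-branch `g` of `q` dominates `f` on a club of `κ`. -/
theorem stmt_6 (κ : Cardinal.{u}) (hreg : κ.IsRegular) (huncount : ℵ₀ < κ)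
    (hpow : κ ^< κ = κ)
    (f : Ordinal.{u} → Ordinal.{u}) (hf : ∀ i, i < κ.ord → f i < κ.ord)
    (p : Set (KNode κ)) (hp : p ∈ PF κ (cobounded κ)) :
    ∃ q ∈ PF κ (cobounded κ), q ⊆ p ∧
      ∀ g : Ordinal.{u} → Ordinal.{u}, IsBranch q g →
        ∃ C : Set Ordinal.{u}, IsClubBelow C κ.ord ∧ C ⊆ {i | f i < g i} :=
  stmt_6_general κ hreg f hf p hp
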